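/- arXiv:2404.02136 — 6 statements merged into one kernel-verified Lean document; each statement's English description precedes it below -/
import Mathlib

section
/- For every integer n ≥ 0, the generating function identity Σ_{k≥0} C_n(k) t^k = (1+t)^n/(1-t)^{n+1} holds as an identity of formal power series, where C_n(x) = Σ_{j=0}^n binom(n,j)·binom(n+x-j, n) is the n-th cross-polynomial. -/
open Polynomial PowerSeries

/-- The polynomial `binom(n + x - k, n)` in the variable `x`. -/
noncomputable def binomPoly (n k : ℕ) : Polynomial ℚ :=
  Polynomial.C ((n.factorial : ℚ)⁻¹) *
    ∏ j ∈ Finset.range n, (Polynomial.X + Polynomial.C ((n : ℚ) - k - j))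

/-- The `n`-th cross-polynomial `C_n(x) = ∑_{j=0}^n binom(n,j) binom(n+x-j,n)`. -/
noncomputable def crossPoly (n : ℕ) : Polynomial ℚ :=
  ∑ j ∈ Finset.range (n + 1), Polynomial.C (n.choose j : ℚ) * binomPoly n j

lemma binomPoly_eval (n j k : ℕ) (h : j ≤ n + k) :
    (binomPoly n j).eval (k : ℚ) = ((n + k - j).choose n : ℚ) := by
  set m := n + k - j with hm
  have hmc : (m : ℚ) = (n : ℚ) + k - j := by
    rw [hm, Nat.cast_sub h]; push_cast; ring
  have hprod : (binomPoly n j).eval (k : ℚ)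
      = (n.factorial : ℚ)⁻¹ * ∏ i ∈ Finset.range n, ((m : ℚ) - i) := by
    simp only [binomPoly, eval_mul, eval_C, eval_prod, eval_add, eval_X]
    congr 1
    refine Finset.prod_congr rfl fun i _ => ?_
    rw [hmc]; ring
  rw [hprod]
  rcases le_or_gt n m with hnm | hnm
  · have : ∏ i ∈ Finset.range n, ((m : ℚ) - i) = (m.descFactorial n : ℚ) := by
      rw [Nat.descFactorial_eq_prod_range, Nat.cast_prod]
      refine Finset.prod_congr rfl fun i hi => ?_
      rw [Nat.cast_sub (le_trans (le_of_lt (Finset.mem_range.mp hi)) hnm)]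
    rw [this, Nat.descFactorial_eq_factorial_mul_choose]
    push_cast
    rw [← mul_assoc, inv_mul_cancel₀ (by exact_mod_cast n.factorial_ne_zero), one_mul]
  · rw [Nat.choose_eq_zero_of_lt hnm, Nat.cast_zero,
      Finset.prod_eq_zero (Finset.mem_range.mpr hnm) (by simp), mul_zero]

lemma ps_coeff_one_add_X_pow (n i : ℕ) :
    (PowerSeries.coeff i) ((1 + PowerSeries.X) ^ n) = (n.choose i : ℚ) := by
  have hc : ((1 + Polynomial.X : Polynomial ℚ) : PowerSeries ℚ) = 1 + PowerSeries.X := by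
    simp
  rw [← hc, ← Polynomial.coe_pow, Polynomial.coeff_coe, Polynomial.coeff_one_add_X_pow]

/-- `∑_{k ≥ 0} C_n(k) t^k = (1+t)^n / (1-t)^{n+1}` as formal power series. -/
theorem cross_polynomial_generating_function (n : ℕ) :
    (PowerSeries.mk fun k => (crossPoly n).eval (k : ℚ)) *
        (1 - PowerSeries.X : PowerSeries ℚ) ^ (n + 1)
      = (1 + PowerSeries.X : PowerSeries ℚ) ^ n := by
  have h1 : (PowerSeries.mk fun k => (crossPoly n).eval (k : ℚ))
      = (1 + PowerSeries.X : PowerSeries ℚ) ^ n *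
        (PowerSeries.mk fun m => ((n + m).choose n : ℚ)) := by
    ext k
    rw [PowerSeries.coeff_mk, PowerSeries.coeff_mul,
      Finset.Nat.sum_antidiagonal_eq_sum_range_succ_mk]
    simp only [coeff_mk, ps_coeff_one_add_X_pow, Nat.succ_eq_add_one]
    have lhs : (crossPoly n).eval (k : ℚ)
        = ∑ j ∈ Finset.range (n + 1), (n.choose j : ℚ) * ((n + k - j).choose n : ℚ) := by
      simp only [crossPoly, eval_finset_sum, eval_mul, eval_C]
      refine Finset.sum_congr rfl fun j hj => ?_
      rw [binomPoly_eval n j k (by have := Finset.mem_range.mp hj; omega)]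
    have e1 : (∑ j ∈ Finset.range (n + 1), (n.choose j : ℚ) * ((n + k - j).choose n : ℚ))
        = ∑ j ∈ Finset.range (n + k + 1), (n.choose j : ℚ) * ((n + k - j).choose n : ℚ) :=
      Finset.sum_subset (by intro x hx; simp only [Finset.mem_range] at *; omega)
        (fun x _ hx => by
          have hnx : n < x := by simp only [Finset.mem_range] at *; omega
          rw [Nat.choose_eq_zero_of_lt hnx]; simp)
    have e2 : (∑ j ∈ Finset.range (k + 1), (n.choose j : ℚ) * ((n + k - j).choose n : ℚ))
        = ∑ j ∈ Finset.range (n + k + 1), (n.choose j : ℚ) * ((n + k - j).choose n : ℚ) :=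
      Finset.sum_subset (by intro x hx; simp only [Finset.mem_range] at *; omega)
        (fun x hx hx' => by
          have hkx : n + k - x < n := by simp only [Finset.mem_range] at *; omega
          rw [Nat.choose_eq_zero_of_lt hkx]; simp)
    have e3 : (∑ i ∈ Finset.range (k + 1), (n.choose i : ℚ) * ((n + (k - i)).choose n : ℚ))
        = ∑ j ∈ Finset.range (k + 1), (n.choose j : ℚ) * ((n + k - j).choose n : ℚ) := by
      refine Finset.sum_congr rfl fun i hi => ?_
      have : n + (k - i) = n + k - i := by
        have := Finset.mem_range.mp hi; omega
      rw [this]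
    rw [lhs, e1, e3, e2]
  rw [h1, mul_assoc, PowerSeries.mk_add_choose_mul_one_sub_pow_eq_one, mul_one]
end

section
/- For every integer d ≥ 1 and every integer n ≥ 0, the following identity of formal power series holds: Σ_{k≥0} ( Σ_{i=0}^{n} (-1)^i · binom(n,i) · C_{d+2(n-i)}(k) ) t^k = (1+t)^d (4t)^n / (1-t)^{d+2n+1}, where C_m denotes the m-th cross-polynomial. -/
open Polynomial PowerSeries

lemma binomPoly_eval_of_le (m j k : ℕ) (hjk : j ≤ k) :
    (binomPoly m j).eval (k : ℚ) = ((m + k - j).choose m : ℚ) := by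
  have hprod : ∏ t ∈ Finset.range m, ((k : ℚ) + ((m : ℚ) - j - t))
      = (((m + k - j).descFactorial m : ℕ) : ℚ) := by
    rw [Nat.descFactorial_eq_prod_range, Nat.cast_prod]
    refine Finset.prod_congr rfl fun t ht => ?_
    have ht' : t < m := Finset.mem_range.mp ht
    have h1 : t ≤ m + k - j := by omega
    have h2 : j ≤ m + k := by omega
    rw [Nat.cast_sub h1, Nat.cast_sub h2]
    push_cast; ring
  simp only [binomPoly, eval_mul, eval_C, eval_prod, eval_add, eval_X, hprod,
    Nat.descFactorial_eq_factorial_mul_choose]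
  push_cast
  rw [← mul_assoc, inv_mul_cancel₀ (by exact_mod_cast m.factorial_ne_zero), one_mul]

lemma binomPoly_eval_of_lt (m j k : ℕ) (hj : j ≤ m) (hk : k < j) :
    (binomPoly m j).eval (k : ℚ) = 0 := by
  simp only [binomPoly, eval_mul, eval_C, eval_prod, eval_add, eval_X]
  rw [Finset.prod_eq_zero (i := m - (j - k)) (Finset.mem_range.mpr (by omega)), mul_zero]
  have h1 : j - k ≤ m := by omega
  rw [Nat.cast_sub h1, Nat.cast_sub hk.le]
  ring

lemma cross_gf (m : ℕ) :
    (PowerSeries.mk fun k => (crossPoly m).eval (k : ℚ)) * (1 - PowerSeries.X : PowerSeries ℚ) ^ (m + 1)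
      = (1 + PowerSeries.X : PowerSeries ℚ) ^ m := by
  have hF : (PowerSeries.mk fun k => (crossPoly m).eval (k : ℚ))
      = ∑ j ∈ Finset.range (m + 1),
          (PowerSeries.C (m.choose j : ℚ) * PowerSeries.X ^ j) *
            PowerSeries.mk (fun k => ((m + k).choose m : ℚ)) := by
    ext k
    rw [map_sum, coeff_mk]
    simp only [crossPoly, eval_finset_sum, eval_mul, eval_C]
    refine Finset.sum_congr rfl fun j hj => ?_
    have hjm : j ≤ m := by simpa [Nat.lt_succ_iff] using hj
    rw [mul_assoc, PowerSeries.coeff_C_mul, PowerSeries.coeff_X_pow_mul', coeff_mk]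
    by_cases h : j ≤ k
    · rw [if_pos h, binomPoly_eval_of_le m j k h,
        show m + (k - j) = m + k - j from by omega]
    · rw [if_neg h, binomPoly_eval_of_lt m j k hjm (by omega), mul_zero]
  rw [hF, Finset.sum_mul]
  have hB : ∀ j ∈ Finset.range (m + 1),
      (PowerSeries.C (m.choose j : ℚ) * PowerSeries.X ^ j) *
          PowerSeries.mk (fun k => ((m + k).choose m : ℚ)) * (1 - PowerSeries.X) ^ (m + 1)
        = PowerSeries.C (m.choose j : ℚ) * PowerSeries.X ^ j := by
    intro j _
    rw [mul_assoc, mul_assoc]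
    rw [PowerSeries.mk_add_choose_mul_one_sub_pow_eq_one, mul_one]
  rw [Finset.sum_congr rfl hB]
  rw [show (1 + PowerSeries.X : PowerSeries ℚ) = PowerSeries.X + 1 from add_comm _ _, add_pow]
  refine Finset.sum_congr rfl fun j _ => ?_
  rw [one_pow, mul_one, map_natCast (PowerSeries.C (R := ℚ)), mul_comm]

/-- Lemma 5.2 (gammalemma): for `d ≥ 1` and `n ≥ 0`,
`∑_{k≥0} (∑_{i=0}^n (-1)^i binom(n,i) C_{d+2(n-i)}(k)) t^k = (1+t)^d (4t)^n / (1-t)^{d+2n+1}`. -/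
theorem gamma_lemma (d n : ℕ) (hd : 1 ≤ d) :
    (PowerSeries.mk fun k =>
        ∑ i ∈ Finset.range (n + 1),
          (-1 : ℚ) ^ i * (n.choose i : ℚ) * (crossPoly (d + 2 * (n - i))).eval (k : ℚ)) *
        (1 - PowerSeries.X : PowerSeries ℚ) ^ (d + 2 * n + 1)
      = (1 + PowerSeries.X : PowerSeries ℚ) ^ d * (4 * PowerSeries.X) ^ n := by
  have hsplit : (PowerSeries.mk fun k =>
        ∑ i ∈ Finset.range (n + 1),
          (-1 : ℚ) ^ i * (n.choose i : ℚ) * (crossPoly (d + 2 * (n - i))).eval (k : ℚ))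
      = ∑ i ∈ Finset.range (n + 1),
          PowerSeries.C ((-1 : ℚ) ^ i * (n.choose i : ℚ)) *
            PowerSeries.mk (fun k => (crossPoly (d + 2 * (n - i))).eval (k : ℚ)) := by
    ext k
    rw [map_sum, coeff_mk]
    refine Finset.sum_congr rfl fun i _ => ?_
    rw [PowerSeries.coeff_C_mul, coeff_mk]
  rw [hsplit, Finset.sum_mul,
    show ((4 : PowerSeries ℚ) * PowerSeries.X) ^ n
      = (-(1 - PowerSeries.X) ^ 2 + (1 + PowerSeries.X) ^ 2 : PowerSeries ℚ) ^ n from by ring_nf,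
    add_pow (-(1 - PowerSeries.X) ^ 2 : PowerSeries ℚ) ((1 + PowerSeries.X) ^ 2) n, Finset.mul_sum]
  refine Finset.sum_congr rfl fun i hi => ?_
  have hin : i ≤ n := by simpa [Nat.lt_succ_iff] using hi
  have hexp : d + 2 * n + 1 = (d + 2 * (n - i) + 1) + 2 * i := by omega
  rw [hexp, pow_add, ← mul_assoc, mul_assoc _ _ ((1 - PowerSeries.X) ^ (d + 2 * (n - i) + 1)),
    cross_gf, show d + 2 * (n - i) = d + 2 * (n - i) from rfl]
  rw [pow_add (1 + PowerSeries.X : PowerSeries ℚ) d (2 * (n - i)), pow_mul, pow_mul, map_mul, map_pow, map_neg, map_one,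
    map_natCast (PowerSeries.C (R := ℚ)), neg_pow ((1 - PowerSeries.X) ^ 2 : PowerSeries ℚ) i]
  ring
end

section
/- For every n ≥ 2, the Ehrhart polynomials satisfy E_{1,1,n}(x) = ((n+2)/(2(n+1)))·(2x+1)·E_{1,n}(x) + (n/(2(n+1)))·E_{1,n-1}(x), where E_{1,n} = C_n is the n-th cross-polynomial and E_{1,1,n} is the polynomial whose generating function is Σ_{k≥0} E_{1,1,n}(k) t^k = h*_{1,1,n}(t)/(1-t)^{n+2} with h*_{1,1,n}(t) = (1+t)^{n+1} + 2n·t·(1+t)^{n-1}. -/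
open Polynomial PowerSeries

section Aux

lemma prod_cast_aux (m n : ℕ) :
    ∏ i ∈ Finset.range n, ((m:ℚ) + n - i) = (n.factorial : ℚ) * ((n + m).choose n : ℚ) := by
  have : ∏ i ∈ Finset.range n, ((m:ℚ) + n - i) = (((n + m).descFactorial n : ℕ) : ℚ) := by
    rw [Nat.descFactorial_eq_prod_range, Nat.cast_prod]
    refine Finset.prod_congr rfl fun i hi => ?_
    rw [Finset.mem_range] at hi
    rw [Nat.cast_sub (by omega)]
    push_cast; ring
  rw [this, Nat.descFactorial_eq_factorial_mul_choose]
  push_cast; ring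

lemma binomPoly_eval_ge (n j k : ℕ) (hjk : j ≤ k) :
    (binomPoly n j).eval (k:ℚ) = ((n + (k - j)).choose n : ℚ) := by
  have hk : (k:ℚ) = ((k - j : ℕ) : ℚ) + j := by
    rw [Nat.cast_sub hjk]; ring
  rw [binomPoly, eval_mul, eval_C, Polynomial.eval_prod]
  have : ∏ i ∈ Finset.range n, (Polynomial.X + Polynomial.C ((n : ℚ) - j - i)).eval (k:ℚ)
      = ∏ i ∈ Finset.range n, (((k - j : ℕ):ℚ) + n - i) := by
    refine Finset.prod_congr rfl fun i _ => ?_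
    rw [eval_add, eval_X, eval_C, hk]; ring
  rw [this, prod_cast_aux]
  have h0 : (n.factorial : ℚ) ≠ 0 := Nat.cast_ne_zero.2 n.factorial_ne_zero
  field_simp

lemma binomPoly_eval_lt (n j k : ℕ) (hk : k < j) (hj : j ≤ n) :
    (binomPoly n j).eval (k:ℚ) = 0 := by
  rw [binomPoly, eval_mul, eval_C, Polynomial.eval_prod]
  rw [Finset.prod_eq_zero (i := k + n - j) (Finset.mem_range.2 (by omega))]
  · ring
  · rw [eval_add, eval_X, eval_C, Nat.cast_sub (by omega)]
    push_cast; ring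

lemma mk_binomPoly (n j : ℕ) (hj : j ≤ n) :
    (PowerSeries.mk fun k => (binomPoly n j).eval (k:ℚ)) * (1 - PowerSeries.X) ^ (n+1)
      = (PowerSeries.X : PowerSeries ℚ) ^ j := by
  have h1 : (PowerSeries.mk fun k => (binomPoly n j).eval (k:ℚ))
      = PowerSeries.X ^ j * (PowerSeries.mk fun k => ((n + k).choose n : ℚ)) := by
    ext k
    rw [coeff_mk, PowerSeries.coeff_X_pow_mul']
    split_ifs with h
    · rw [coeff_mk, binomPoly_eval_ge n j k h]
    · exact binomPoly_eval_lt n j k (by omega) hj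
  rw [h1, mul_assoc, PowerSeries.mk_add_choose_mul_one_sub_pow_eq_one, mul_one]

lemma mk_sum_aux {ι : Type*} (s : Finset ι) (f : ι → ℕ → ℚ) :
    (PowerSeries.mk fun k => ∑ j ∈ s, f j k) = ∑ j ∈ s, PowerSeries.mk (f j) := by
  ext k
  simp [coeff_mk]

lemma mk_cmul_aux (c : ℚ) (f : ℕ → ℚ) :
    (PowerSeries.mk fun k => c * f k) = PowerSeries.C (R := ℚ) c * PowerSeries.mk f := by
  ext k
  simp [coeff_mk, PowerSeries.coeff_C_mul]

lemma sum_choose_X (n : ℕ) :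
    ∑ j ∈ Finset.range (n+1), PowerSeries.C (R := ℚ) (n.choose j : ℚ) * PowerSeries.X ^ j
      = (1 + PowerSeries.X) ^ n := by
  rw [add_comm (1 : PowerSeries ℚ), add_pow]
  refine Finset.sum_congr rfl fun j hj => ?_
  rw [one_pow, mul_one, map_natCast, mul_comm]

lemma sum_choose_weighted (n : ℕ) (hn : 1 ≤ n) :
    ∑ j ∈ Finset.range (n+1),
        PowerSeries.C (R := ℚ) ((n.choose j : ℚ) * (2*((n:ℚ) - j) + 1)) * PowerSeries.X ^ j
      = PowerSeries.C (R := ℚ) (2*n) * (1 + PowerSeries.X) ^ (n-1) + (1 + PowerSeries.X) ^ n := by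
  have key : ∀ j ∈ Finset.range (n+1),
      PowerSeries.C (R := ℚ) ((n.choose j : ℚ) * (2*((n:ℚ) - j) + 1)) * PowerSeries.X ^ j
      = PowerSeries.C (R := ℚ) (2*n) * (PowerSeries.C (R := ℚ) (((n-1).choose j : ℚ)) * PowerSeries.X ^ j)
        + PowerSeries.C (R := ℚ) (n.choose j : ℚ) * PowerSeries.X ^ j := by
    intro j hj
    rw [Finset.mem_range] at hj
    have hc : ((n.choose j : ℚ)) * ((n:ℚ) - j) = (n:ℚ) * ((n-1).choose j : ℚ) := by
      have := Nat.choose_mul_succ_eq (n-1) j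
      rw [Nat.sub_add_cancel hn] at this
      have := congrArg (fun x : ℕ => (x : ℚ)) this
      push_cast at this
      rw [Nat.cast_sub (by omega)] at this
      linear_combination this.symm
    have hc2 : ((n.choose j : ℚ)) * (2*((n:ℚ) - j) + 1)
        = 2*(n:ℚ)*((n-1).choose j : ℚ) + (n.choose j : ℚ) := by linear_combination 2 * hc
    rw [hc2, map_add, add_mul, map_mul]
    ring
  rw [Finset.sum_congr rfl key, Finset.sum_add_distrib, sum_choose_X, ← Finset.mul_sum]
  congr 2
  have h : n + 1 = (n - 1 + 1) + 1 := by omega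
  rw [h, Finset.sum_range_succ, Nat.choose_eq_zero_of_lt (by omega)]
  simp only [Nat.cast_zero, map_zero, zero_mul, add_zero]
  rw [sum_choose_X (n-1)]

lemma binomPoly_succ (n j : ℕ) :
    binomPoly (n+1) j
      = Polynomial.C (((n:ℚ)+1)⁻¹) * (Polynomial.X + Polynomial.C ((n:ℚ)+1-j)) * binomPoly n j := by
  rw [binomPoly, binomPoly, Finset.prod_range_succ']
  have h1 : ∀ i ∈ Finset.range n,
      (Polynomial.X + Polynomial.C (((n+1 : ℕ):ℚ) - j - ((i+1 : ℕ):ℚ)))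
      = (Polynomial.X + Polynomial.C ((n:ℚ) - j - i)) := by
    intro i _
    congr 1
    push_cast; ring
  rw [Finset.prod_congr rfl h1]
  have h2 : (((n+1).factorial : ℚ))⁻¹ = ((n:ℚ)+1)⁻¹ * ((n.factorial : ℚ))⁻¹ := by
    rw [Nat.factorial_succ]
    push_cast
    rw [mul_inv]
  rw [h2]
  have h3 : (((n+1:ℕ):ℚ) - (j:ℚ) - ((0:ℕ):ℚ)) = ((n:ℚ)+1-j) := by push_cast; ring
  rw [h3, map_mul]
  ring

lemma twoX1_binom (n j : ℕ) :
    (2 * Polynomial.X + 1) * binomPoly n j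
      = Polynomial.C (2*(n:ℚ)+2) * binomPoly (n+1) j
        - Polynomial.C (2*((n:ℚ)-j)+1) * binomPoly n j := by
  rw [binomPoly_succ]
  have hn : (n:ℚ) + 1 ≠ 0 := by positivity
  have h : ((n:ℚ)+1)⁻¹ * ((n:ℚ)+1) = 1 := inv_mul_cancel₀ hn
  have h1 := congrArg Polynomial.C h
  simp only [map_mul, map_add, map_one] at h1
  simp only [map_add, map_sub, map_mul, map_one, map_ofNat]
  linear_combination (-2 * (Polynomial.X + Polynomial.C (n:ℚ) + 1 - Polynomial.C (j:ℚ)) * binomPoly n j) * h1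

lemma mk_crossPoly (n : ℕ) :
    (PowerSeries.mk fun k => (crossPoly n).eval (k:ℚ)) * (1 - PowerSeries.X) ^ (n+1)
      = (1 + PowerSeries.X : PowerSeries ℚ) ^ n := by
  have h1 : (PowerSeries.mk fun k => (crossPoly n).eval (k:ℚ))
      = ∑ j ∈ Finset.range (n+1),
          PowerSeries.C (R := ℚ) (n.choose j : ℚ) * PowerSeries.mk (fun k => (binomPoly n j).eval (k:ℚ)) := by
    have : (fun k : ℕ => (crossPoly n).eval (k:ℚ))
        = fun k : ℕ => ∑ j ∈ Finset.range (n+1), (n.choose j : ℚ) * (binomPoly n j).eval (k:ℚ) := by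
      funext k
      rw [crossPoly, Polynomial.eval_finset_sum]
      exact Finset.sum_congr rfl fun j _ => by rw [eval_mul, eval_C]
    rw [this, mk_sum_aux]
    exact Finset.sum_congr rfl fun j _ => mk_cmul_aux _ _
  rw [h1, Finset.sum_mul]
  rw [← sum_choose_X]
  refine Finset.sum_congr rfl fun j hj => ?_
  rw [Finset.mem_range] at hj
  rw [mul_assoc, mk_binomPoly n j (by omega)]

lemma mk_twoX_crossPoly (n : ℕ) (hn : 1 ≤ n) :
    (PowerSeries.mk fun k => (2*(k:ℚ)+1) * (crossPoly n).eval (k:ℚ))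
        * (1 - PowerSeries.X) ^ (n+2)
      = PowerSeries.C (R := ℚ) (2*(n:ℚ)+2) * (1 + PowerSeries.X) ^ n
        - (1 - PowerSeries.X) * (PowerSeries.C (R := ℚ) (2*n) * (1 + PowerSeries.X) ^ (n-1)
            + (1 + PowerSeries.X) ^ n) := by
  have h1 : (PowerSeries.mk fun k => (2*(k:ℚ)+1) * (crossPoly n).eval (k:ℚ))
      = ∑ j ∈ Finset.range (n+1), PowerSeries.C (R := ℚ) (n.choose j : ℚ) *
          (PowerSeries.C (R := ℚ) (2*(n:ℚ)+2) * PowerSeries.mk (fun k => (binomPoly (n+1) j).eval (k:ℚ))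
           - PowerSeries.C (R := ℚ) (2*((n:ℚ)-j)+1) * PowerSeries.mk (fun k => (binomPoly n j).eval (k:ℚ))) := by
    have hfun : (fun k : ℕ => (2*(k:ℚ)+1) * (crossPoly n).eval (k:ℚ))
        = fun k : ℕ => ∑ j ∈ Finset.range (n+1), (n.choose j : ℚ) *
            ((2*(n:ℚ)+2) * (binomPoly (n+1) j).eval (k:ℚ)
             - (2*((n:ℚ)-j)+1) * (binomPoly n j).eval (k:ℚ)) := by
      funext k
      have h2 : (2*(k:ℚ)+1) * (crossPoly n).eval (k:ℚ)
          = ((2 * Polynomial.X + 1) * crossPoly n).eval (k:ℚ) := by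
        rw [eval_mul]; simp
      rw [h2, crossPoly, Finset.mul_sum, Polynomial.eval_finset_sum]
      refine Finset.sum_congr rfl fun j _ => ?_
      rw [show (2 * Polynomial.X + 1) * (Polynomial.C ((n.choose j : ℚ)) * binomPoly n j)
          = Polynomial.C ((n.choose j : ℚ)) * ((2 * Polynomial.X + 1) * binomPoly n j) by ring,
        twoX1_binom]
      simp [eval_mul, eval_sub, eval_C]
    rw [hfun, mk_sum_aux]
    refine Finset.sum_congr rfl fun j _ => ?_
    rw [mk_cmul_aux]
    congr 1
    have : (fun k : ℕ => (2*(n:ℚ)+2) * (binomPoly (n+1) j).eval (k:ℚ)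
        - (2*((n:ℚ)-j)+1) * (binomPoly n j).eval (k:ℚ))
        = fun k : ℕ => ((2*(n:ℚ)+2) * (binomPoly (n+1) j).eval (k:ℚ))
          + (-(2*((n:ℚ)-j)+1)) * ((binomPoly n j).eval (k:ℚ)) := by
      funext k; ring
    calc PowerSeries.mk (fun k : ℕ => (2*(n:ℚ)+2) * (binomPoly (n+1) j).eval (k:ℚ)
        - (2*((n:ℚ)-j)+1) * (binomPoly n j).eval (k:ℚ))
        = PowerSeries.mk (fun k : ℕ => (2*(n:ℚ)+2) * (binomPoly (n+1) j).eval (k:ℚ))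
          - PowerSeries.mk (fun k : ℕ => (2*((n:ℚ)-j)+1) * (binomPoly n j).eval (k:ℚ)) := by
          ext m; simp [coeff_mk]
      _ = _ := by rw [mk_cmul_aux, mk_cmul_aux]
  rw [h1, Finset.sum_mul]
  have hterm : ∀ j ∈ Finset.range (n+1),
      (PowerSeries.C (R := ℚ) (n.choose j : ℚ) *
        (PowerSeries.C (R := ℚ) (2*(n:ℚ)+2) * PowerSeries.mk (fun k => (binomPoly (n+1) j).eval (k:ℚ))
         - PowerSeries.C (R := ℚ) (2*((n:ℚ)-j)+1) * PowerSeries.mk (fun k => (binomPoly n j).eval (k:ℚ))))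
        * (1 - PowerSeries.X) ^ (n+2)
      = PowerSeries.C (R := ℚ) (2*(n:ℚ)+2) * (PowerSeries.C (R := ℚ) (n.choose j : ℚ) * PowerSeries.X ^ j)
        - (1 - PowerSeries.X) *
            (PowerSeries.C (R := ℚ) ((n.choose j : ℚ) * (2*((n:ℚ)-j)+1)) * PowerSeries.X ^ j) := by
    intro j hj
    rw [Finset.mem_range] at hj
    have hb1 : (PowerSeries.mk fun k => (binomPoly (n+1) j).eval (k:ℚ)) * (1 - PowerSeries.X) ^ (n+2)
        = (PowerSeries.X : PowerSeries ℚ) ^ j := mk_binomPoly (n+1) j (by omega)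
    have hb2 : (PowerSeries.mk fun k => (binomPoly n j).eval (k:ℚ)) * (1 - PowerSeries.X) ^ (n+1)
        = (PowerSeries.X : PowerSeries ℚ) ^ j := mk_binomPoly n j (by omega)
    have hpow : ((1 - PowerSeries.X : PowerSeries ℚ)) ^ (n+2)
        = (1 - PowerSeries.X) ^ (n+1) * (1 - PowerSeries.X) := by rw [← pow_succ]
    rw [map_mul]
    calc _ = PowerSeries.C (R := ℚ) (n.choose j : ℚ) * (PowerSeries.C (R := ℚ) (2*(n:ℚ)+2) *
            ((PowerSeries.mk fun k => (binomPoly (n+1) j).eval (k:ℚ)) * (1 - PowerSeries.X) ^ (n+2))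
         - PowerSeries.C (R := ℚ) (2*((n:ℚ)-j)+1) *
            (((PowerSeries.mk fun k => (binomPoly n j).eval (k:ℚ)) * (1 - PowerSeries.X) ^ (n+1))
              * (1 - PowerSeries.X))) := by rw [hpow]; ring
      _ = _ := by rw [hb1, hb2]; ring
  rw [Finset.sum_congr rfl hterm, Finset.sum_sub_distrib, ← Finset.mul_sum, ← Finset.mul_sum,
    sum_choose_X, sum_choose_weighted n hn]

end Aux

/-- For `n ≥ 2`, if `E` is the Ehrhart polynomial of the symmetric edge polytope of
`K_{1,1,n}`, i.e. `∑_{k≥0} E(k)t^k = ((1+t)^{n+1} + 2n t (1+t)^{n-1})/(1-t)^{n+2}`, then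
`E(x) = ((n+2)/(2(n+1)))(2x+1) E_{1,n}(x) + (n/(2(n+1))) E_{1,n-1}(x)`. -/
theorem ehrhart_relation_11n (n : ℕ) (hn : 2 ≤ n) (E : Polynomial ℚ)
    (hE : (PowerSeries.mk fun k => E.eval (k : ℚ)) *
        (1 - PowerSeries.X : PowerSeries ℚ) ^ (n + 2)
      = (1 + PowerSeries.X : PowerSeries ℚ) ^ (n + 1)
        + PowerSeries.C (R := ℚ) (2 * n) * PowerSeries.X * (1 + PowerSeries.X) ^ (n - 1)) :
    E = Polynomial.C (((n : ℚ) + 2) / (2 * ((n : ℚ) + 1))) *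
          ((2 * Polynomial.X + 1) * crossPoly n)
        + Polynomial.C ((n : ℚ) / (2 * ((n : ℚ) + 1))) * crossPoly (n - 1) := by
  set c1 : ℚ := ((n : ℚ) + 2) / (2 * ((n : ℚ) + 1)) with hc1
  set c2 : ℚ := (n : ℚ) / (2 * ((n : ℚ) + 1)) with hc2
  set F : Polynomial ℚ := Polynomial.C c1 * ((2 * Polynomial.X + 1) * crossPoly n)
      + Polynomial.C c2 * crossPoly (n - 1) with hF
  have hn1 : ((n:ℚ) + 1) ≠ 0 := by positivity
  -- generating function of F
  have hmkF : (PowerSeries.mk fun k => F.eval (k : ℚ))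
      = PowerSeries.C (R := ℚ) c1 * (PowerSeries.mk fun k => (2*(k:ℚ)+1) * (crossPoly n).eval (k:ℚ))
        + PowerSeries.C (R := ℚ) c2 * (PowerSeries.mk fun k => (crossPoly (n-1)).eval (k:ℚ)) := by
    have : (fun k : ℕ => F.eval (k:ℚ))
        = fun k : ℕ => c1 * ((2*(k:ℚ)+1) * (crossPoly n).eval (k:ℚ))
            + c2 * ((crossPoly (n-1)).eval (k:ℚ)) := by
      funext k
      rw [hF]
      simp [eval_mul, eval_add, eval_C]
    rw [this]
    rw [show (fun k : ℕ => c1 * ((2*(k:ℚ)+1) * (crossPoly n).eval (k:ℚ))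
            + c2 * ((crossPoly (n-1)).eval (k:ℚ)))
        = fun k : ℕ => (fun m : ℕ => c1 * ((2*(m:ℚ)+1) * (crossPoly n).eval (m:ℚ))) k
            + (fun m : ℕ => c2 * ((crossPoly (n-1)).eval (m:ℚ))) k from rfl]
    have hadd : ∀ f g : ℕ → ℚ, PowerSeries.mk (fun k => f k + g k)
        = PowerSeries.mk f + PowerSeries.mk g := by
      intro f g; ext m; simp [coeff_mk]
    rw [hadd, mk_cmul_aux, mk_cmul_aux]
  have hgF : (PowerSeries.mk fun k => F.eval (k : ℚ)) *
        (1 - PowerSeries.X : PowerSeries ℚ) ^ (n + 2)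
      = (1 + PowerSeries.X : PowerSeries ℚ) ^ (n + 1)
        + PowerSeries.C (R := ℚ) (2 * n) * PowerSeries.X * (1 + PowerSeries.X) ^ (n - 1) := by
    rw [hmkF, add_mul, mul_assoc, mul_assoc, mk_twoX_crossPoly n (by omega)]
    have hsplit : ((1 - PowerSeries.X : PowerSeries ℚ)) ^ (n + 2)
        = (1 - PowerSeries.X) ^ ((n-1) + 1) * (1 - PowerSeries.X) ^ 2 := by
      rw [← pow_add]; congr 1; omega
    rw [hsplit, ← mul_assoc (PowerSeries.mk fun k => (crossPoly (n-1)).eval (k:ℚ)),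
      mk_crossPoly (n-1)]
    -- now a polynomial identity in (1+X), (1-X) with coefficients
    have hq1 : c1 + c2 = 1 := by
      rw [hc1, hc2]; field_simp; ring
    have hq2 : c1 * (4*(n:ℚ)+2) - 2*c2 = 2*(n:ℚ)+2 := by
      rw [hc1, hc2]; field_simp; ring
    have h1 := congrArg (PowerSeries.C (R := ℚ)) hq1
    have h2 := congrArg (PowerSeries.C (R := ℚ)) hq2
    simp only [map_add, map_sub, map_mul, map_one, map_ofNat, map_natCast] at h1 h2
    have hu : (1 + PowerSeries.X : PowerSeries ℚ) ^ n
        = (1 + PowerSeries.X) ^ (n-1) * (1 + PowerSeries.X) := by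
      rw [← pow_succ]; congr 1; omega
    have hu1 : (1 + PowerSeries.X : PowerSeries ℚ) ^ (n+1)
        = (1 + PowerSeries.X) ^ (n-1) * (1 + PowerSeries.X) ^ 2 := by
      rw [← pow_add]; congr 1; omega
    rw [hu, hu1]
    simp only [map_add, map_mul, map_ofNat, map_natCast]
    linear_combination ((1 + PowerSeries.X : PowerSeries ℚ) ^ (n-1) * (1 + PowerSeries.X ^ 2)) * h1
      + ((1 + PowerSeries.X : PowerSeries ℚ) ^ (n-1) * PowerSeries.X) * h2
  -- cancel to get equality of generating functions
  have hX : (1 - PowerSeries.X : PowerSeries ℚ) ^ (n + 2) ≠ 0 := by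
    apply pow_ne_zero
    intro h
    have := congrArg (PowerSeries.constantCoeff (R := ℚ)) h
    simp at this
  have hmk : (PowerSeries.mk fun k => E.eval (k : ℚ))
      = (PowerSeries.mk fun k => F.eval (k : ℚ)) :=
    mul_right_cancel₀ hX (hE.trans hgF.symm)
  -- conclude polynomial equality
  have heval : ∀ k : ℕ, E.eval (k:ℚ) = F.eval (k:ℚ) := fun k => by
    have := congrArg (PowerSeries.coeff (R := ℚ) k) hmk
    simpa [coeff_mk] using this
  have : E - F = 0 := by
    apply Polynomial.eq_zero_of_infinite_isRoot
    apply Set.infinite_of_injective_forall_mem (f := fun k : ℕ => (k : ℚ))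
    · exact fun a b hab => Nat.cast_injective hab
    · intro k
      simp only [Set.mem_setOf_eq, Polynomial.IsRoot, Polynomial.eval_sub, heval k, sub_self]
  have := sub_eq_zero.mp this
  rw [this, hF]
end

section
/- For all n ≥ 1, the roots of the cross-polynomial C_n(x) = Σ_{k=0}^n binom(n,k)·binom(n+x-k, n) all have real part equal to −1/2. -/
open Polynomial Finset

noncomputable def PP (n : ℕ) (c : ℚ) : Polynomial ℚ :=
  ∏ j ∈ Finset.range n, (Polynomial.X + Polynomial.C (c - j))

noncomputable def TT (n : ℕ) : Polynomial ℚ :=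
  ∑ j ∈ Finset.range (n + 1), Polynomial.C (n.choose j : ℚ) * PP n ((n : ℚ) - j)

lemma PP_congr {n : ℕ} {c d : ℚ} (h : c = d) : PP n c = PP n d := by rw [h]

lemma PP_succ (n : ℕ) (c : ℚ) : PP (n+1) c = PP n c * (X + C (c - n)) :=
  Finset.prod_range_succ _ n

lemma PP_succ_shift (n : ℕ) (c : ℚ) : PP (n+1) (c+1) = PP n c * (X + C (c + 1)) := by
  simp only [PP]
  rw [Finset.prod_range_succ']
  congr 1
  · exact Finset.prod_congr rfl fun j _ => by congr 2; push_cast; ring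
  · congr 2; push_cast; ring

lemma PP_pascal (n : ℕ) (c : ℚ) :
    PP (n+1) (c+1) = C ((n:ℚ)+1) * PP n c + PP (n+1) c := by
  have h : C (c + 1) = C ((n:ℚ)+1) + C (c - (n:ℚ)) := by
    rw [← C_add]; congr 1; ring
  rw [PP_succ_shift, PP_succ, h]; ring

lemma PP_pair (n : ℕ) (c : ℚ) :
    PP (n+1) (c+1) + PP (n+1) c = (2*X + C (2*c + 1 - n)) * PP n c := by
  have h : C (2*c + 1 - (n:ℚ)) = C (c+1) + C (c - (n:ℚ)) := by
    rw [← C_add]; congr 1; ring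
  rw [PP_succ_shift, PP_succ, h]; ring

lemma coeff_id (m k : ℕ) :
    ((m+1).choose (k+1) : ℚ) * ((m:ℚ) + 1 - 2*((k:ℚ)+1)) =
      ((m:ℚ)+1) * ((m.choose (k+1) : ℚ) - (m.choose k : ℚ)) := by
  have hA : ((k:ℚ)+1) * ((m+1).choose (k+1) : ℚ) = ((m:ℚ)+1) * (m.choose k : ℚ) := by
    have := Nat.add_one_mul_choose_eq m k
    have h2 : ((Nat.succ m * m.choose k : ℕ) : ℚ) = (((m+1).choose (k+1) * Nat.succ k : ℕ) : ℚ) := by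
      rw [this]
    push_cast at h2
    linarith
  have hB : (((m+1).choose (k+1) : ℕ) : ℚ) = (m.choose k : ℚ) + (m.choose (k+1) : ℚ) := by
    rw [Nat.choose_succ_succ]
    push_cast
    ring
  linear_combination ((m:ℚ)+1) * hB - 2 * hA

lemma TT_rec (m : ℕ) :
    TT (m+2) = (2*X+1) * TT (m+1) + C (((m:ℚ)+1)^2) * TT m := by
  -- Step 0: Pascal split of TT (m+2)
  have h0 : TT (m+2) =
      ∑ k ∈ range (m+2), (C ((m+1).choose k : ℚ) * PP (m+2) ((m:ℚ)+1-k)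
        + C ((m+1).choose (k+1) : ℚ) * PP (m+2) ((m:ℚ)+1-k)) + PP (m+2) ((m:ℚ)+2) := by
    rw [TT, Finset.sum_range_succ']
    push_cast
    congr 1
    · refine Finset.sum_congr rfl fun k hk => ?_
      rw [Nat.choose_succ_succ (m+1) k, show (m:ℚ)+2-((k:ℚ)+1) = (m:ℚ)+1-(k:ℚ) by ring]
      push_cast [Nat.succ_eq_add_one]
      rw [C_add]
      ring
    · rw [Nat.choose_zero_right, show (m:ℚ)+2-0 = (m:ℚ)+2 by ring]
      simp
  -- Step 1: reassemble the shifted sum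
  have h1 : ∑ j ∈ range (m+3), C ((m+1).choose j : ℚ) * PP (m+2) ((m:ℚ)+2-j)
      = (∑ k ∈ range (m+2), C ((m+1).choose (k+1) : ℚ) * PP (m+2) ((m:ℚ)+1-k))
        + PP (m+2) ((m:ℚ)+2) := by
    rw [Finset.sum_range_succ']
    congr 1
    · refine Finset.sum_congr rfl fun k hk => ?_
      congr 1
      exact PP_congr (by push_cast; ring)
    · rw [Nat.choose_zero_right, show (m:ℚ)+2-(0:ℕ) = (m:ℚ)+2 by push_cast; ring]
      simp
  have h1' : ∑ j ∈ range (m+3), C ((m+1).choose j : ℚ) * PP (m+2) ((m:ℚ)+2-j)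
      = ∑ j ∈ range (m+2), C ((m+1).choose j : ℚ) * PP (m+2) ((m:ℚ)+2-j) := by
    rw [Finset.sum_range_succ, Nat.choose_eq_zero_of_lt (by omega)]
    norm_num
  -- Step 2: apply PP_pair pointwise
  have h2 : TT (m+2) = ∑ k ∈ range (m+2),
      ((2*X+1) * (C ((m+1).choose k : ℚ) * PP (m+1) ((m:ℚ)+1-k))
        + C (((m+1).choose k : ℚ) * ((m:ℚ)+1-2*k)) * PP (m+1) ((m:ℚ)+1-k)) := by
    rw [h0, Finset.sum_add_distrib, add_assoc, ← h1, h1', ← Finset.sum_add_distrib]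
    refine Finset.sum_congr rfl fun k hk => ?_
    have hp := PP_pair (m+1) ((m:ℚ)+1-k)
    rw [show (m:ℚ)+1-(k:ℚ)+1 = (m:ℚ)+2-(k:ℚ) by ring] at hp
    rw [show (2*((m:ℚ)+1-(k:ℚ)) + 1 - ((m+1:ℕ):ℚ)) = 1 + ((m:ℚ)+1-2*(k:ℚ)) by push_cast; ring] at hp
    calc C ((m+1).choose k : ℚ) * PP (m+2) ((m:ℚ)+1-k)
          + C ((m+1).choose k : ℚ) * PP (m+2) ((m:ℚ)+2-k)
        = C ((m+1).choose k : ℚ) * (PP (m+2) ((m:ℚ)+2-k) + PP (m+2) ((m:ℚ)+1-k)) := by ring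
      _ = C ((m+1).choose k : ℚ) * ((2*X + C (1 + ((m:ℚ)+1-2*k))) * PP (m+1) ((m:ℚ)+1-k)) := by
            rw [hp]
      _ = _ := by rw [C_add, C_mul, C_1]; push_cast; ring
  -- Step 3: split off (2X+1)·TT(m+1)
  have hT1 : ∑ k ∈ range (m+2), C ((m+1).choose k : ℚ) * PP (m+1) ((m:ℚ)+1-k) = TT (m+1) := by
    rw [TT]
    refine Finset.sum_congr rfl fun k hk => ?_
    congr 1
    exact PP_congr (by push_cast; ring)
  -- Step 4: the correction sum equals C((m+1)^2)·TT m
  have hW : ∑ j ∈ range (m+2), C (m.choose j : ℚ) * PP (m+1) ((m:ℚ)+1-j)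
      = ∑ j ∈ range (m+1), C (m.choose j : ℚ) * PP (m+1) ((m:ℚ)+1-j) := by
    rw [Finset.sum_range_succ, Nat.choose_eq_zero_of_lt (by omega)]
    norm_num
  have hW' : ∑ j ∈ range (m+2), C (m.choose j : ℚ) * PP (m+1) ((m:ℚ)+1-j)
      = (∑ k ∈ range (m+1), C (m.choose (k+1) : ℚ) * PP (m+1) ((m:ℚ)-k))
        + PP (m+1) ((m:ℚ)+1) := by
    rw [Finset.sum_range_succ']
    congr 1
    · refine Finset.sum_congr rfl fun k hk => ?_
      congr 1
      exact PP_congr (by push_cast; ring)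
    · rw [Nat.choose_zero_right, show (m:ℚ)+1-((0:ℕ):ℚ) = (m:ℚ)+1 by push_cast; ring]
      simp
  have hPas : ∑ k ∈ range (m+1), (C (m.choose k : ℚ) * PP (m+1) ((m:ℚ)+1-k)
        - C (m.choose k : ℚ) * PP (m+1) ((m:ℚ)-k))
      = C ((m:ℚ)+1) * TT m := by
    rw [TT, Finset.mul_sum]
    refine Finset.sum_congr rfl fun k hk => ?_
    have hp := PP_pascal m ((m:ℚ)-k)
    rw [show (m:ℚ)-(k:ℚ)+1 = (m:ℚ)+1-(k:ℚ) by ring] at hp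
    rw [hp]
    push_cast
    ring
  have hS : ∑ k ∈ range (m+2), C (((m+1).choose k : ℚ) * ((m:ℚ)+1-2*k)) * PP (m+1) ((m:ℚ)+1-k)
      = C (((m:ℚ)+1)^2) * TT m := by
    rw [Finset.sum_range_succ']
    have hstep : ∀ k ∈ range (m+1),
        C (((m+1).choose (k+1) : ℚ) * ((m:ℚ)+1-2*((k+1:ℕ):ℚ))) * PP (m+1) ((m:ℚ)+1-((k+1:ℕ):ℚ))
        = C ((m:ℚ)+1) * (C (m.choose (k+1) : ℚ) * PP (m+1) ((m:ℚ)-k)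
            - C (m.choose k : ℚ) * PP (m+1) ((m:ℚ)-k)) := by
      intro k hk
      have hc := coeff_id m k
      rw [PP_congr (show (m:ℚ)+1-((k+1:ℕ):ℚ) = (m:ℚ)-k by push_cast; ring)]
      rw [show ((m:ℚ)+1-2*((k+1:ℕ):ℚ)) = (m:ℚ)+1-2*((k:ℚ)+1) by push_cast; ring, hc]
      rw [C_mul, C_sub]
      ring
    rw [Finset.sum_congr rfl hstep]
    have ht0 : C (((m+1).choose 0 : ℚ) * ((m:ℚ)+1-2*((0:ℕ):ℚ))) * PP (m+1) ((m:ℚ)+1-((0:ℕ):ℚ))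
        = C ((m:ℚ)+1) * PP (m+1) ((m:ℚ)+1) := by
      rw [Nat.choose_zero_right, PP_congr (show (m:ℚ)+1-((0:ℕ):ℚ) = (m:ℚ)+1 by push_cast; ring)]
      norm_num
    rw [ht0, ← Finset.mul_sum, Finset.sum_sub_distrib]
    have hsum1 : ∑ k ∈ range (m+1), C (m.choose (k+1) : ℚ) * PP (m+1) ((m:ℚ)-k)
        = (∑ j ∈ range (m+1), C (m.choose j : ℚ) * PP (m+1) ((m:ℚ)+1-j)) - PP (m+1) ((m:ℚ)+1) := by
      rw [← hW, hW']
      ring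
    rw [hsum1]
    rw [show ∀ (A B P2 : Polynomial ℚ), C ((m:ℚ)+1) * (A - P2 - B) + C ((m:ℚ)+1) * P2
        = C ((m:ℚ)+1) * (A - B) from fun A B P2 => by ring]
    rw [← Finset.sum_sub_distrib, hPas, ← mul_assoc, ← C_mul]
    congr 1
    ring
  rw [h2, Finset.sum_add_distrib, ← Finset.mul_sum, hT1, hS]

lemma TT_zero : TT 0 = 1 := by
  simp [TT, PP]

lemma TT_one : TT 1 = 2*X + 1 := by
  simp [TT, PP, Finset.sum_range_succ, Finset.prod_range_succ]
  ring

lemma seq_pos (u : ℂ) (hu : 0 < u.re) (a : ℕ → ℂ) (h0 : a 0 = 1) (h1 : a 1 = u)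
    (hrec : ∀ m : ℕ, ∃ c : ℝ, 0 < c ∧ a (m+2) = u * a (m+1) + (c:ℂ) * a m) :
    ∀ n, 0 < ((a (n+1)).re * (a n).re + (a (n+1)).im * (a n).im) := by
  intro n
  induction n with
  | zero => simpa [h0, h1] using hu
  | succ m ih =>
    obtain ⟨c, hc, hr⟩ := hrec m
    have hne : a (m+1) ≠ 0 := by
      intro h
      rw [h] at ih
      simp at ih
    have h2 : (a (m+1)).re ≠ 0 ∨ (a (m+1)).im ≠ 0 := by
      by_contra h
      push_neg at h
      exact hne (Complex.ext h.1 h.2)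
    have hsq : 0 < (a (m+1)).re^2 + (a (m+1)).im^2 := by
      rcases h2 with h|h <;> positivity
    rw [hr]
    simp only [Complex.add_re, Complex.add_im, Complex.mul_re, Complex.mul_im,
      Complex.ofReal_re, Complex.ofReal_im]
    nlinarith [mul_pos hu hsq, mul_pos hc ih]

lemma seq_ne (u : ℂ) (hu : 0 < u.re) (a : ℕ → ℂ) (h0 : a 0 = 1) (h1 : a 1 = u)
    (hrec : ∀ m : ℕ, ∃ c : ℝ, 0 < c ∧ a (m+2) = u * a (m+1) + (c:ℂ) * a m) :
    ∀ n, a n ≠ 0 := by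
  intro n
  cases n with
  | zero => rw [h0]; exact one_ne_zero
  | succ m =>
    intro h
    have := seq_pos u hu a h0 h1 hrec m
    rw [h] at this
    simp at this

lemma TT_aeval_rec (w : ℂ) (m : ℕ) :
    aeval w (TT (m+2)) = (2*w+1) * aeval w (TT (m+1))
      + ((((m:ℝ)+1)^2 : ℝ) : ℂ) * aeval w (TT m) := by
  rw [TT_rec]
  simp only [map_add, map_mul, map_ofNat, aeval_X, aeval_C, map_one]
  push_cast
  ring

lemma TT_parity (n : ℕ) (z : ℂ) :
    aeval (-1-z) (TT n) = (-1)^n * aeval z (TT n) := by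
  induction n using Nat.twoStepInduction generalizing z with
  | zero => simp [TT_zero]
  | one =>
    rw [TT_one]
    simp only [map_add, map_mul, map_ofNat, aeval_X, map_one]
    ring
  | more m ih1 ih2 =>
    rw [show m+2 = (m+1)+1 from rfl] at *
    rw [TT_aeval_rec, TT_aeval_rec, ih1, ih2]
    ring

lemma crossPoly_eq (n : ℕ) : crossPoly n = C ((n.factorial : ℚ)⁻¹) * TT n := by
  rw [crossPoly, TT, Finset.mul_sum]
  refine Finset.sum_congr rfl fun j hj => ?_
  simp only [binomPoly, PP]
  ring

lemma TT_ne_zero (n : ℕ) (w : ℂ) (hw : 0 < (2*w+1).re) : aeval w (TT n) ≠ 0 := by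
  refine seq_ne (2*w+1) hw (fun k => aeval w (TT k)) ?_ ?_ ?_ n
  · show aeval w (TT 0) = 1
    rw [TT_zero]; simp
  · show aeval w (TT 1) = 2*w+1
    rw [TT_one]; simp only [map_add, map_mul, map_ofNat, aeval_X, map_one]
  · intro m
    exact ⟨((m:ℝ)+1)^2, by positivity, TT_aeval_rec w m⟩

/-- All complex roots of the cross-polynomial `C_n` lie on the canonical line
`Re(z) = -1/2`. -/
theorem crossPoly_roots_on_canonical_line (n : ℕ) (hn : 1 ≤ n) (z : ℂ)
    (hz : Polynomial.aeval z (crossPoly n) = 0) : z.re = -1 / 2 := by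
  have hT : aeval z (TT n) = 0 := by
    rw [crossPoly_eq, map_mul, aeval_C] at hz
    have hne : (algebraMap ℚ ℂ) ((n.factorial : ℚ)⁻¹) ≠ 0 := by
      simp [Nat.factorial_ne_zero]
    exact (mul_eq_zero.mp hz).resolve_left hne
  rcases lt_trichotomy ((2*z+1).re) 0 with h|h|h
  · have h2 : aeval (-1-z) (TT n) = 0 := by
      rw [TT_parity n z, hT, mul_zero]
    have hre : ∀ w : ℂ, (2*w+1).re = 2*w.re + 1 := by
      intro w; simp [Complex.add_re, Complex.mul_re]
    have h3 : 0 < (2*(-1-z)+1).re := by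
      rw [hre] at h ⊢
      simp only [Complex.sub_re, Complex.neg_re, Complex.one_re]
      linarith
    exact absurd h2 (TT_ne_zero n _ h3)
  · have : (2*z+1).re = 2*z.re + 1 := by
      simp [Complex.add_re, Complex.mul_re]
    rw [this] at h
    linarith
  · exact absurd hT (TT_ne_zero n z h)
end

section
/- Every cross-polynomial satisfies the functional equation (−1)^n · C_n(x) = C_n(−1−x) as polynomials, where C_n(x) = Σ_{k=0}^n binom(n,k)·binom(n+x-k, n). -/
open Polynomial

lemma binomPoly_comp (n k : ℕ) (hk : k ≤ n) :
    (binomPoly n k).comp (-1 - Polynomial.X) = Polynomial.C ((-1 : ℚ) ^ n) * binomPoly n (n - k) := by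
  unfold binomPoly
  rw [mul_comp, C_comp, prod_comp]
  have h1 : ∀ j ∈ Finset.range n,
      (Polynomial.X + Polynomial.C ((n : ℚ) - k - j)).comp (-1 - Polynomial.X)
        = (-1) * (Polynomial.X + Polynomial.C (1 - (n : ℚ) + k + j)) := by
    intro j _
    simp only [add_comp, sub_comp, neg_comp, X_comp, C_comp, natCast_comp, map_sub, map_add, map_one, map_natCast]
    ring
  rw [Finset.prod_congr rfl h1, Finset.prod_mul_distrib, Finset.prod_const]
  have h2 : ∏ j ∈ Finset.range n, (Polynomial.X + Polynomial.C (1 - (n : ℚ) + k + j))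
      = ∏ j ∈ Finset.range n, (Polynomial.X + Polynomial.C ((k : ℚ) - j)) := by
    rw [← Finset.prod_range_reflect (fun j => Polynomial.X + Polynomial.C ((k : ℚ) - j)) n]
    refine Finset.prod_congr rfl fun j hj => ?_
    have hj' : j < n := Finset.mem_range.mp hj
    have hc : ((n - 1 - j : ℕ) : ℚ) = (n : ℚ) - 1 - j := by
      have : ((n - 1 - j : ℕ) : ℚ) = ((n : ℚ) - 1) - j := by
        rw [Nat.cast_sub (by omega : j ≤ n - 1), Nat.cast_sub (by omega : 1 ≤ n)]
        norm_num
      simpa using this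
    rw [hc]
    congr 1
    ring_nf
  rw [h2]
  have hnk : ((n - k : ℕ) : ℚ) = (n : ℚ) - k := by
    rw [Nat.cast_sub hk]
  have h3 : ∀ j ∈ Finset.range n,
      (Polynomial.X + Polynomial.C ((n : ℚ) - (n - k : ℕ) - j))
        = (Polynomial.X + Polynomial.C ((k : ℚ) - j)) := by
    intro j _
    rw [hnk]; congr 1; ring_nf
  rw [Finset.prod_congr rfl h3, Finset.card_range, map_pow, map_neg, map_one]
  ring

/-- The functional equation `(-1)^n C_n(x) = C_n(-1-x)` as a polynomial identity. -/
theorem crossPoly_functional_equation (n : ℕ) :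
    Polynomial.C ((-1 : ℚ) ^ n) * crossPoly n = (crossPoly n).comp (-1 - Polynomial.X) := by
  unfold crossPoly
  rw [Finset.mul_sum]
  rw [show ((∑ j ∈ Finset.range (n + 1), Polynomial.C (n.choose j : ℚ) * binomPoly n j).comp
      (-1 - Polynomial.X))
      = ∑ j ∈ Finset.range (n + 1),
        (Polynomial.C (n.choose j : ℚ) * binomPoly n j).comp (-1 - Polynomial.X) from
    map_sum (compRingHom _) _ _]
  have h : ∀ j ∈ Finset.range (n + 1),
      (Polynomial.C (n.choose j : ℚ) * binomPoly n j).comp (-1 - Polynomial.X)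
        = (fun j => Polynomial.C ((-1 : ℚ) ^ n) * (Polynomial.C (n.choose j : ℚ) * binomPoly n j))
            (n - j) := by
    intro j hj
    have hj' : j ≤ n := by have := Finset.mem_range.mp hj; omega
    simp only [mul_comp, C_comp, binomPoly_comp n j hj', Nat.choose_symm hj',
      Nat.sub_sub_self hj']
    ring
  rw [Finset.sum_congr rfl h]
  exact (Finset.sum_range_reflect
    (fun j => Polynomial.C ((-1 : ℚ) ^ n) * (Polynomial.C (n.choose j : ℚ) * binomPoly n j))
    (n + 1)).symm
end

section
/- For all integers n ≥ 1, (2x+1)·C_{n-1}(x) = n·C_n(x) − (n−1)·C_{n-2}(x) as polynomials (with the convention C_{-1} = 0 when n = 1), where C_m(x) = Σ_{k=0}^m binom(m,k)·binom(m+x-k, m). -/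
open Polynomial Finset

noncomputable def BP (n : ℕ) (c : ℚ) : Polynomial ℚ :=
  Polynomial.C ((n.factorial : ℚ)⁻¹) *
    ∏ j ∈ Finset.range n, (Polynomial.X + Polynomial.C (c - j))

lemma binomPoly_eq (n k : ℕ) : binomPoly n k = BP n ((n : ℚ) - k) := rfl

lemma BP_succ_shift (n : ℕ) (c : ℚ) : BP (n+1) (c+1) = BP (n+1) c + BP n c := by
  have hfac : Polynomial.C ((n.factorial : ℚ))⁻¹
      = Polynomial.C (((n+1).factorial : ℚ))⁻¹ * Polynomial.C ((n:ℚ)+1) := by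
    rw [← Polynomial.C_mul]
    congr 1
    rw [Nat.factorial_succ]
    have h1 : ((n.factorial : ℚ)) ≠ 0 := by exact_mod_cast n.factorial_ne_zero
    have h2 : ((n:ℚ)+1) ≠ 0 := by positivity
    push_cast
    field_simp
  have hQ : ∏ j ∈ range (n+1), (X + Polynomial.C (c + 1 - (j:ℚ))) =
      (X + Polynomial.C (c+1)) * ∏ j ∈ range n, (X + Polynomial.C (c - j)) := by
    rw [Finset.prod_range_succ']
    rw [mul_comm]
    congr 1
    · congr 1
      push_cast
      ring
    · apply Finset.prod_congr rfl
      intro j _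
      congr 1
      push_cast
      ring
  unfold BP
  rw [hQ, Finset.prod_range_succ, hfac]
  have hC : (X + Polynomial.C (c+1)) = (X + Polynomial.C (c - n)) + Polynomial.C ((n:ℚ)+1) := by
    rw [show (c+1 : ℚ) = (c - n) + ((n:ℚ)+1) by ring, Polynomial.C_add]
    ring
  rw [hC]
  ring

lemma BP_nat (n m : ℕ) :
    BP n (m:ℚ) = ∑ j ∈ range (n+1), Polynomial.C ((m.choose (n - j) : ℚ)) * BP j 0 := by
  induction m generalizing n with
  | zero =>
    rw [Finset.sum_range_succ, Nat.sub_self]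
    rw [Finset.sum_eq_zero (fun j hj => by
      rw [Nat.choose_eq_zero_of_lt (by simp at hj; omega)]
      simp)]
    simp
  | succ m ih =>
    cases n with
    | zero =>
      simp [BP]
    | succ n =>
      rw [show ((m+1:ℕ):ℚ) = (m:ℚ)+1 by push_cast; ring, BP_succ_shift, ih (n+1), ih n]
      rw [Finset.sum_range_succ (n := n+1), Finset.sum_range_succ (n := n+1)]
      rw [add_right_comm]
      congr 1
      swap
      · simp
      rw [← Finset.sum_add_distrib]
      apply Finset.sum_congr rfl
      intro j hj
      have hj' : j ≤ n := by simp at hj; omega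
      rw [show n+1-j = (n-j)+1 by omega, ← add_mul, ← Polynomial.C_add,
        Nat.choose_succ_succ']
      congr 2
      push_cast
      ring

lemma two_X_mul_BP (j : ℕ) : (2 * X + 1) * BP j 0 =
    Polynomial.C (2*((j:ℚ)+1)) * BP (j+1) 0 + Polynomial.C (2*(j:ℚ)+1) * BP j 0 := by
  have h : Polynomial.C ((j:ℚ)+1) * BP (j+1) 0 = BP j 0 * (X - Polynomial.C (j:ℚ)) := by
    unfold BP
    rw [Finset.prod_range_succ]
    have hfac : Polynomial.C ((j:ℚ)+1) * Polynomial.C (((j+1).factorial : ℚ))⁻¹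
        = Polynomial.C ((j.factorial : ℚ))⁻¹ := by
      rw [← Polynomial.C_mul]
      congr 1
      rw [Nat.factorial_succ]
      have h1 : ((j.factorial : ℚ)) ≠ 0 := by exact_mod_cast j.factorial_ne_zero
      have h2 : ((j:ℚ)+1) ≠ 0 := by positivity
      push_cast
      field_simp
    rw [← mul_assoc, hfac, show (0 - (j:ℚ)) = -(j:ℚ) by ring, Polynomial.C_neg]
    ring
  have hC2 : Polynomial.C (2:ℚ) = 2 := map_ofNat Polynomial.C 2
  have h2 : Polynomial.C (2*((j:ℚ)+1)) = 2 * Polynomial.C ((j:ℚ)+1) := by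
    rw [Polynomial.C_mul, hC2]
  have h3 : Polynomial.C (2*(j:ℚ)+1) = 2 * Polynomial.C (j:ℚ) + 1 := by
    rw [Polynomial.C_add, Polynomial.C_mul, hC2, Polynomial.C_1]
  rw [h2, h3]
  linear_combination (-2) * h

lemma key_nat (m j : ℕ) (hj : j ≤ m) :
    ∑ k ∈ range (m+1), m.choose k * (m-k).choose (m-j) = m.choose j * 2^j := by
  rw [← Finset.sum_subset (Finset.range_subset_range.2 (by omega : j+1 ≤ m+1))
    (fun k hk hk' => by
      simp only [Finset.mem_range] at hk hk'
      rw [show (m-k).choose (m-j) = 0 from Nat.choose_eq_zero_of_lt (by omega), Nat.mul_zero])]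
  rw [show m.choose j * 2^j = ∑ k ∈ range (j+1), m.choose j * j.choose k by
    rw [← Finset.mul_sum, Nat.sum_range_choose]]
  apply Finset.sum_congr rfl
  intro k hk
  have hk' : k ≤ j := by simp at hk; omega
  rw [show m - j = (m-k)-(j-k) by omega, Nat.choose_symm (by omega)]
  exact (Nat.choose_mul (n := m) hk').symm

lemma crossPoly_basis (m : ℕ) :
    crossPoly m = ∑ j ∈ range (m+1), Polynomial.C ((m.choose j * 2^j : ℕ) : ℚ) * BP j 0 := by
  have h2 : ∀ k, k ≤ m → Polynomial.C ((m.choose k : ℕ):ℚ) * binomPoly m k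
      = ∑ j ∈ range (m+1),
          Polynomial.C (((m.choose k : ℕ):ℚ) * (((m-k).choose (m-j) : ℕ):ℚ)) * BP j 0 := by
    intro k hk
    rw [binomPoly_eq, show ((m:ℚ) - k) = (((m - k:ℕ)):ℚ) by push_cast [hk]; ring,
      BP_nat, Finset.mul_sum]
    apply Finset.sum_congr rfl
    intro j _
    rw [← mul_assoc, ← Polynomial.C_mul]
  calc crossPoly m = ∑ k ∈ range (m+1), ∑ j ∈ range (m+1),
        Polynomial.C (((m.choose k : ℕ):ℚ) * (((m-k).choose (m-j) : ℕ):ℚ)) * BP j 0 :=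
      Finset.sum_congr rfl (fun k hk => h2 k (by simp at hk; omega))
    _ = ∑ j ∈ range (m+1), ∑ k ∈ range (m+1),
        Polynomial.C (((m.choose k : ℕ):ℚ) * (((m-k).choose (m-j) : ℕ):ℚ)) * BP j 0 :=
      Finset.sum_comm
    _ = ∑ j ∈ range (m+1), Polynomial.C ((m.choose j * 2^j : ℕ) : ℚ) * BP j 0 := by
      apply Finset.sum_congr rfl
      intro j hj
      have hj' : j ≤ m := by simp at hj; omega
      rw [← Finset.sum_mul, ← map_sum]
      congr 2
      exact_mod_cast congrArg (Nat.cast : ℕ → ℚ) (key_nat m j hj')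

lemma key_scalar (m j : ℕ) :
    2*(j:ℚ) * (((m+1).choose (j-1) * 2^(j-1) : ℕ):ℚ)
      + (2*(j:ℚ)+1) * (((m+1).choose j * 2^j : ℕ):ℚ)
    = ((m:ℚ)+2) * (((m+2).choose j * 2^j : ℕ):ℚ)
      - ((m:ℚ)+1) * ((m.choose j * 2^j : ℕ):ℚ) := by
  cases j with
  | zero => simp; ring
  | succ i =>
    by_cases hi : i ≤ m + 1
    · have h1 : (((m+2).choose (i+1) : ℕ) : ℚ)
          = ((m+1).choose i : ℕ) + (((m+1).choose (i+1) : ℕ) : ℚ) := by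
        rw [Nat.choose_succ_succ]; push_cast; ring
      have h2 : (((m+1).choose (i+1):ℕ):ℚ) = (m.choose i : ℕ) + ((m.choose (i+1) : ℕ):ℚ) := by
        rw [Nat.choose_succ_succ]; push_cast; ring
      have h3 : ((m:ℚ)+1) * (m.choose i : ℕ) = (((m+1).choose (i+1) : ℕ):ℚ) * ((i:ℚ)+1) := by
        exact_mod_cast congrArg (Nat.cast : ℕ → ℚ) (Nat.add_one_mul_choose_eq m i)
      have h4 : ((m.choose i : ℕ):ℚ) * ((m:ℚ)+1)
          = (((m+1).choose i : ℕ):ℚ) * ((m:ℚ)+1-(i:ℚ)) := by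
        have h5 := congrArg (Nat.cast : ℕ → ℚ) (Nat.choose_mul_succ_eq m i)
        push_cast [Nat.cast_sub (by omega : i ≤ m + 1)] at h5
        convert h5 using 2
      have hs : ((i:ℕ)+1) - 1 = i := by omega
      rw [hs]
      push_cast
      linear_combination (-(2*(2:ℚ)^i)*((m:ℚ)+2))*h1 + (-(2*(2:ℚ)^i)*((m:ℚ)+1))*h2
        + (-(4*(2:ℚ)^i))*h3 + (2*(2:ℚ)^i)*h4
    · have e1 : (m+1).choose i = 0 := Nat.choose_eq_zero_of_lt (by omega)
      have e2 : (m+1).choose (i+1) = 0 := Nat.choose_eq_zero_of_lt (by omega)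
      have e3 : (m+2).choose (i+1) = 0 := Nat.choose_eq_zero_of_lt (by omega)
      have e4 : m.choose (i+1) = 0 := Nat.choose_eq_zero_of_lt (by omega)
      have hs : ((i:ℕ)+1) - 1 = i := by omega
      rw [hs, e1, e2, e3, e4]
      push_cast
      ring

/-- For `n ≥ 1`: `(2x+1) C_{n-1}(x) = n C_n(x) - (n-1) C_{n-2}(x)` as polynomials.
For `n = 1` the coefficient `n - 1` vanishes, realizing the convention `C_{-1} = 0`. -/
theorem crossPoly_three_term_recursion (n : ℕ) (hn : 1 ≤ n) :
    (2 * Polynomial.X + 1) * crossPoly (n - 1)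
      = Polynomial.C (n : ℚ) * crossPoly n
        - Polynomial.C ((n : ℚ) - 1) * crossPoly (n - 2) := by
  obtain ⟨m', rfl⟩ : ∃ m', n = m' + 1 := ⟨n - 1, by omega⟩
  cases m' with
  | zero =>
    show (2 * Polynomial.X + 1) * crossPoly 0
      = Polynomial.C ((1:ℕ) : ℚ) * crossPoly 1 - Polynomial.C (((1:ℕ) : ℚ) - 1) * crossPoly 0
    norm_num
    simp [crossPoly, binomPoly, Finset.sum_range_succ, Finset.prod_range_succ]
    ring
  | succ m =>
    show (2 * Polynomial.X + 1) * crossPoly (m+1)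
      = Polynomial.C ((m+2:ℕ) : ℚ) * crossPoly (m+2)
        - Polynomial.C (((m+2:ℕ) : ℚ) - 1) * crossPoly m
    set f : ℕ → Polynomial ℚ :=
      fun j => Polynomial.C (2*(j:ℚ) * (((m+1).choose (j-1) * 2^(j-1) : ℕ):ℚ)) * BP j 0 with hf
    have hL : (2 * Polynomial.X + 1) * crossPoly (m+1)
        = (∑ j ∈ range (m+3), f j)
          + ∑ j ∈ range (m+3),
              Polynomial.C ((2*(j:ℚ)+1) * (((m+1).choose j * 2^j : ℕ):ℚ)) * BP j 0 := by
      rw [crossPoly_basis (m+1), Finset.mul_sum]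
      have hterm : ∀ j ∈ range (m+2),
          (2 * Polynomial.X + 1) * (Polynomial.C (((m+1).choose j * 2^j : ℕ):ℚ) * BP j 0)
          = f (j+1)
            + Polynomial.C ((2*(j:ℚ)+1) * (((m+1).choose j * 2^j : ℕ):ℚ)) * BP j 0 := by
        intro j _
        have h1 : (2 * Polynomial.X + 1) * (Polynomial.C (((m+1).choose j * 2^j : ℕ):ℚ) * BP j 0)
            = Polynomial.C (((m+1).choose j * 2^j : ℕ):ℚ) * ((2 * X + 1) * BP j 0) := by ring
        have e1 : f (j+1) = Polynomial.C ((((m+1).choose j * 2^j : ℕ):ℚ) * (2*((j:ℚ)+1)))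
            * BP (j+1) 0 := by
          rw [hf]
          simp only [Nat.add_sub_cancel]
          congr 1
          push_cast
          ring
        rw [h1, two_X_mul_BP, mul_add, e1, ← mul_assoc, ← mul_assoc, ← Polynomial.C_mul,
          ← Polynomial.C_mul, mul_comm (2*(j:ℚ)+1)]
      rw [Finset.sum_congr rfl hterm, Finset.sum_add_distrib]
      congr 1
      · rw [Finset.sum_range_succ' f (m+2)]
        have : f 0 = 0 := by
          rw [hf]; norm_num
        rw [this, add_zero]
      · rw [Finset.sum_subset (Finset.range_subset_range.2 (by omega : m+2 ≤ m+3))]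
        intro x hx hx'
        have : x = m + 2 := by simp at hx hx'; omega
        subst this
        rw [Nat.choose_eq_zero_of_lt (by omega)]
        norm_num
    have hR : Polynomial.C ((m+2:ℕ) : ℚ) * crossPoly (m+2)
          - Polynomial.C (((m+2:ℕ) : ℚ) - 1) * crossPoly m
        = (∑ j ∈ range (m+3),
            Polynomial.C (((m:ℚ)+2) * (((m+2).choose j * 2^j : ℕ):ℚ)) * BP j 0)
          - ∑ j ∈ range (m+3),
              Polynomial.C (((m:ℚ)+1) * ((m.choose j * 2^j : ℕ):ℚ)) * BP j 0 := by
      rw [crossPoly_basis (m+2), crossPoly_basis m, Finset.mul_sum, Finset.mul_sum]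
      congr 1
      · apply Finset.sum_congr rfl
        intro j _
        rw [← mul_assoc, ← Polynomial.C_mul]
        congr 2
        push_cast
        ring
      · rw [Finset.sum_subset (Finset.range_subset_range.2 (by omega : m+1 ≤ m+3))
          (fun x hx hx' => by
            rw [show m.choose x = 0 from Nat.choose_eq_zero_of_lt (by simp at hx hx'; omega)]
            norm_num)]
        apply Finset.sum_congr rfl
        intro j _
        rw [← mul_assoc, ← Polynomial.C_mul]
        congr 2
        push_cast
        ring
    rw [hL, hR, ← Finset.sum_add_distrib, ← Finset.sum_sub_distrib]
    apply Finset.sum_congr rfl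
    intro j _
    rw [hf, ← add_mul, ← sub_mul, ← Polynomial.C_add, ← Polynomial.C_sub]
    exact congrArg (· * BP j 0) (congrArg Polynomial.C (key_scalar m j))
end
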